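/- Let V be a ℚ-algebra, let h, u ∈ V, let m ≥ 0 be an integer, and let n be a nonzero rational number. Assume u·hᵐ·u = n·u and u·hˡ·u = 0 for every integer l with 0 ≤ l < m. For 0 ≤ i ≤ m set πᵢ := n⁻¹·h^(m−i)·u·hⁱ. Then each πᵢ is idempotent, and πᵢ·πⱼ = 0 whenever i < j. -/

import Mathlib

/-!
Multiplying two of the elements `h^(m-i) u h^i` leaves `u h^(i + m - j) u` in the middle, and
the hypotheses evaluate it: for `i = j` the exponent is `m` and the middle collapses to `n u`,
for `i < j` the exponent is below `m` and it vanishes.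
-/

theorem pow_mul_mul_pow_mul_pow_mul_mul_pow {M : Type*} [Monoid M] (h u : M) (a b c d : ℕ) :
    h ^ a * u * h ^ b * (h ^ c * u * h ^ d) = h ^ a * (u * h ^ (b + c) * u) * h ^ d := by
  simp only [pow_add, mul_assoc]

section Semiorthogonal

variable {K V : Type*} [Field K] [Ring V] [Algebra K V]

/-- The paper's `πᵢ`. -/
def semiorthogonalProj (n : K) (h u : V) (m i : ℕ) : V :=
  n⁻¹ • (h ^ (m - i) * u * h ^ i)

theorem semiorthogonalProj_mul (n : K) (h u : V) (m i j : ℕ) :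
    semiorthogonalProj n h u m i * semiorthogonalProj n h u m j =
      (n⁻¹ * n⁻¹) • (h ^ (m - i) * (u * h ^ (i + (m - j)) * u) * h ^ j) := by
  rw [semiorthogonalProj, semiorthogonalProj, smul_mul_smul_comm,
    pow_mul_mul_pow_mul_pow_mul_mul_pow]

theorem semiorthogonalProj_mul_self {n : K} (hn : n ≠ 0) {h u : V} {m : ℕ}
    (hm : u * h ^ m * u = n • u) {i : ℕ} (hi : i ≤ m) :
    semiorthogonalProj n h u m i * semiorthogonalProj n h u m i = semiorthogonalProj n h u m i := by
  rw [semiorthogonalProj_mul, Nat.add_sub_cancel' hi, hm, mul_smul_comm, smul_mul_assoc,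
    smul_smul, inv_mul_cancel_right₀ hn, semiorthogonalProj]

theorem semiorthogonalProj_mul_eq_zero_of_lt (n : K) {h u : V} {m : ℕ}
    (hl : ∀ l < m, u * h ^ l * u = 0) {i j : ℕ} (hj : j ≤ m) (hij : i < j) :
    semiorthogonalProj n h u m i * semiorthogonalProj n h u m j = 0 := by
  rw [semiorthogonalProj_mul, hl _ (by omega), mul_zero, zero_mul, smul_zero]

end Semiorthogonal

theorem stmt_6 {V : Type*} [Ring V] [Algebra ℚ V] (h u : V) (m : ℕ) (n : ℚ) (hn : n ≠ 0)
    (hm : u * h ^ m * u = n • u)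
    (hl : ∀ l : ℕ, l < m → u * h ^ l * u = 0)
    (π : ℕ → V) (hπ : ∀ i, π i = n⁻¹ • (h ^ (m - i) * u * h ^ i)) :
    (∀ i, i ≤ m → π i * π i = π i) ∧
    (∀ i j, i ≤ m → j ≤ m → i < j → π i * π j = 0) := by
  obtain rfl : π = semiorthogonalProj n h u m := funext hπ
  exact ⟨fun i hi => semiorthogonalProj_mul_self hn hm hi,
    fun i j _ hj hij => semiorthogonalProj_mul_eq_zero_of_lt n hl hj hij⟩
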